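/- arXiv:1210.3389 — 4 statements merged into one kernel-verified Lean document; each statement's English description precedes it below -/
import Mathlib

section
/- If p and q are equivalent walks of length n > 0 in the CPS graph Γ(A) (i.e. the tensor products p_n ⊗ ... ⊗ p_0 and q_n ⊗ ... ⊗ q_0 are equal as monomials), then for all 0 ≤ k ≤ ⌊n/2⌋, the prefix walks p_0⋯p_{2k+1} and q_0⋯q_{2k+1} are equivalent. -/
/- Combinatorial model of a monomial algebra A = T(V)/I and its CPS graph Γ(A).
   Monomials of the tensor algebra on generators indexed by σ are lists over σ;
   the tensor product w ⊗ m is list concatenation w ++ m. -/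

namespace CPS

/-- Monomials of the tensor algebra: words in the generators. -/
abbrev Mon (σ : Type) := List σ

/-- A monomial ideal, given by finitely many monomial generators of degree ≥ 2. -/
structure MonIdeal (σ : Type) where
  gens : Finset (Mon σ)
  deg2 : ∀ r ∈ gens, 2 ≤ r.length

variable {σ : Type}

/-- Membership in the two-sided monomial ideal generated by `gens`. -/
def MonIdeal.Mem (I : MonIdeal σ) (m : Mon σ) : Prop :=
  ∃ a r b, r ∈ I.gens ∧ m = a ++ r ++ b

/-- 𝔄_m : the set of minimal left annihilating monomials of m
    (w ∉ I, w ⊗ m ∈ I, and no proper suffix of w left-annihilates m). -/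
def Ann (I : MonIdeal σ) (m : Mon σ) : Set (Mon σ) :=
  {w | ¬ I.Mem m ∧ ¬ I.Mem w ∧ I.Mem (w ++ m) ∧
    ∀ w' : Mon σ, w' <:+ w → w' ≠ w → ¬ I.Mem (w' ++ m)}

/-- Directed edges of the CPS graph Γ(A): m₁ → m₂ iff m₂ ∈ 𝔄_{m₁}. -/
def Edge (I : MonIdeal σ) (m₁ m₂ : Mon σ) : Prop := m₂ ∈ Ann I m₁

/-- The vertex sets 𝔊_i : 𝔊_0 = degree-1 generators, 𝔊_{i+1} = ⋃_{w ∈ 𝔊_i} 𝔄_w. -/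
def Gs (I : MonIdeal σ) : ℕ → Set (Mon σ)
  | 0 => {m | m.length = 1}
  | (i+1) => ⋃ w ∈ Gs I i, Ann I w

/-- The vertex set 𝔊 = ⋃_i 𝔊_i of the CPS graph. -/
def Vertices (I : MonIdeal σ) : Set (Mon σ) := ⋃ i, Gs I i

/-- A walk of length n in Γ(A), encoded by a function giving the vertices
    p 0, p 1, ..., p n (values beyond n are irrelevant). -/
def IsWalk (I : MonIdeal σ) (n : ℕ) (p : ℕ → Mon σ) : Prop :=
  p 0 ∈ Vertices I ∧ ∀ i < n, Edge I (p i) (p (i+1))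

/-- An infinite walk in Γ(A). -/
def InfWalk (I : MonIdeal σ) (p : ℕ → Mon σ) : Prop :=
  p 0 ∈ Vertices I ∧ ∀ i, Edge I (p i) (p (i+1))

/-- The reversed tensor product p_n ⊗ p_{n-1} ⊗ ⋯ ⊗ p_0 of the vertices of a walk. -/
def tens (n : ℕ) (p : ℕ → Mon σ) : Mon σ :=
  (((List.range (n+1)).map p).reverse).flatten

/-- Equivalence of walks of the same length n: equal reversed tensor products. -/
def WEquiv (n : ℕ) (p q : ℕ → Mon σ) : Prop := tens n p = tens n q

/-- A walk is anchored if its first vertex lies in 𝔊_0 (is a degree-1 generator). -/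
def Anchored (p : ℕ → Mon σ) : Prop := (p 0).length = 1

/-- A walk is admissible if it is a walk equivalent to an anchored walk. -/
def Admissible (I : MonIdeal σ) (n : ℕ) (p : ℕ → Mon σ) : Prop :=
  IsWalk I n p ∧ ∃ q, IsWalk I n q ∧ Anchored q ∧ WEquiv n p q

/-- The walk obtained by deleting the first i vertices. -/
def shift (p : ℕ → Mon σ) (i : ℕ) : ℕ → Mon σ := fun t => p (i + t)

end CPS

namespace CPS
variable {σ : Type}

private lemma mem_of_suffix (I : MonIdeal σ) {m c : Mon σ} (h : m <:+ c) (hm : I.Mem m) :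
    I.Mem c := by
  obtain ⟨a, r, b, hr, hab⟩ := hm
  obtain ⟨e, he⟩ := h
  exact ⟨e ++ a, r, b, hr, by rw [← he, hab]; simp⟩

/-- Key step: if `B ∈ Ann A`, `D ∈ Ann C` and `B++A` is a suffix of `D++C`, they are equal. -/
private lemma pair_eq (I : MonIdeal σ) {A B C D : Mon σ}
    (hB : B ∈ Ann I A) (hD : D ∈ Ann I C) (h : (B ++ A) <:+ (D ++ C)) :
    B ++ A = D ++ C := by
  obtain ⟨hC1, hD1, hDC, hmin⟩ := hD
  obtain ⟨_, _, hBA, _⟩ := hB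
  refine h.eq_of_length ?_
  by_contra hne
  have hlt : (B ++ A).length < (D ++ C).length :=
    lt_of_le_of_ne h.length_le hne
  rcases le_or_gt (B ++ A).length C.length with hle | hgt
  · -- B++A is a suffix of C, so C ∈ I, contradiction
    have hCsuf : C <:+ D ++ C := List.suffix_append D C
    rcases List.suffix_or_suffix_of_suffix h hCsuf with h1 | h2
    · exact hC1 (mem_of_suffix I h1 hBA)
    · have := h2.length_le
      have : C = B ++ A := h2.eq_of_length (le_antisymm this hle)
      exact hC1 (this ▸ hBA)
  · -- B++A = w' ++ C with w' a proper suffix of D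
    have hCsuf : C <:+ B ++ A := by
      have hCsuf' : C <:+ D ++ C := List.suffix_append D C
      rcases List.suffix_or_suffix_of_suffix h hCsuf' with h1 | h2
      · exact absurd h1.length_le (by omega)
      · exact h2
    obtain ⟨w', hw'⟩ := hCsuf
    obtain ⟨e, he⟩ := h
    have hD' : e ++ w' = D := by
      have h2 : (e ++ w') ++ C = D ++ C := by rw [List.append_assoc, hw']; exact he
      exact List.append_cancel_right h2
    have hw'suf : w' <:+ D := ⟨e, hD'⟩
    have hw'ne : w' ≠ D := by
      intro hEq
      have : (B ++ A).length = (D ++ C).length := by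
        rw [← hw', hEq]
      omega
    exact hmin w' hw'suf hw'ne (hw' ▸ hBA)

private lemma tens_succ (n : ℕ) (p : ℕ → Mon σ) :
    tens (n + 1) p = p (n + 1) ++ tens n p := by
  unfold tens
  rw [show n + 1 + 1 = (n+1) + 1 from rfl, List.range_succ]
  simp

private lemma tens_split (p : ℕ → Mon σ) {m n : ℕ} (h : m ≤ n) :
    ∃ S, tens n p = S ++ tens m p := by
  induction n with
  | zero => exact ⟨[], by simpa using (Nat.le_zero.mp h ▸ rfl)⟩
  | succ n ih =>
    rcases Nat.eq_or_lt_of_le h with rfl | hlt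
    · exact ⟨[], rfl⟩
    · obtain ⟨S, hS⟩ := ih (Nat.lt_succ_iff.mp hlt)
      exact ⟨p (n+1) ++ S, by rw [tens_succ, hS, List.append_assoc]⟩


/-- Lemma 2.7(1): equivalent walks have equivalent odd-length prefixes. -/
theorem stmt0 {σ : Type} (I : MonIdeal σ) (n : ℕ) (hn : 0 < n) (p q : ℕ → Mon σ)
    (hp : IsWalk I n p) (hq : IsWalk I n q) (h : WEquiv n p q) :
    ∀ k : ℕ, 2 * k + 1 ≤ n → WEquiv (2 * k + 1) p q := by
  intro k
  induction k with
  | zero =>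
    intro hk
    -- tens 1 p and tens 1 q are suffixes of the same word
    obtain ⟨Sp, hSp⟩ := tens_split p hk
    obtain ⟨Sq, hSq⟩ := tens_split q hk
    have hsufp : tens 1 p <:+ tens n p := ⟨Sp, hSp.symm⟩
    have hsufq : tens 1 q <:+ tens n q := ⟨Sq, hSq.symm⟩
    rw [h] at hsufp
    have h1p : tens 1 p = p 1 ++ p 0 := by unfold tens; simp [List.range_succ]
    have h1q : tens 1 q = q 1 ++ q 0 := by unfold tens; simp [List.range_succ]
    have ep : Edge I (p 0) (p 1) := hp.2 0 hn
    have eq' : Edge I (q 0) (q 1) := hq.2 0 hn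
    rcases List.suffix_or_suffix_of_suffix hsufp hsufq with hs | hs
    · unfold WEquiv
      rw [h1p, h1q] at hs ⊢
      exact pair_eq I ep eq' hs
    · unfold WEquiv
      rw [h1p, h1q] at hs ⊢
      exact (pair_eq I eq' ep hs).symm
  | succ k ih =>
    intro hk
    have hk' : 2 * k + 1 ≤ n := by omega
    have hprev : tens (2 * k + 1) p = tens (2 * k + 1) q := ih hk'
    set m := 2 * k + 1 with hm
    have hm3 : 2 * (k + 1) + 1 = m + 2 := by omega
    rw [hm3]
    -- split off the common prefix walk
    obtain ⟨Sp, hSp⟩ := tens_split p (show m + 2 ≤ n by omega)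
    obtain ⟨Sq, hSq⟩ := tens_split q (show m + 2 ≤ n by omega)
    have h2p : tens (m + 2) p = (p (m + 2) ++ p (m + 1)) ++ tens m p := by
      rw [show m + 2 = (m + 1) + 1 from rfl, tens_succ, tens_succ, List.append_assoc]
    have h2q : tens (m + 2) q = (q (m + 2) ++ q (m + 1)) ++ tens m q := by
      rw [show m + 2 = (m + 1) + 1 from rfl, tens_succ, tens_succ, List.append_assoc]
    -- the "remaining" words after the common prefix are equal
    have hW : Sp ++ (p (m + 2) ++ p (m + 1)) = Sq ++ (q (m + 2) ++ q (m + 1)) := by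
      have : (Sp ++ (p (m + 2) ++ p (m + 1))) ++ tens m p
           = (Sq ++ (q (m + 2) ++ q (m + 1))) ++ tens m p := by
        calc (Sp ++ (p (m + 2) ++ p (m + 1))) ++ tens m p
            = Sp ++ tens (m+2) p := by rw [h2p]; simp [List.append_assoc]
          _ = tens n p := hSp.symm
          _ = tens n q := h
          _ = Sq ++ tens (m+2) q := hSq
          _ = (Sq ++ (q (m + 2) ++ q (m + 1))) ++ tens m q := by
                rw [h2q]; simp [List.append_assoc]
          _ = (Sq ++ (q (m + 2) ++ q (m + 1))) ++ tens m p := by rw [hprev]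
      exact List.append_cancel_right this
    have hsufp : (p (m + 2) ++ p (m + 1)) <:+ Sp ++ (p (m + 2) ++ p (m + 1)) :=
      List.suffix_append _ _
    have hsufq : (q (m + 2) ++ q (m + 1)) <:+ Sp ++ (p (m + 2) ++ p (m + 1)) := by
      rw [hW]; exact List.suffix_append _ _
    have ep : Edge I (p (m + 1)) (p (m + 2)) := hp.2 (m + 1) (by omega)
    have eq' : Edge I (q (m + 1)) (q (m + 2)) := hq.2 (m + 1) (by omega)
    have hpair : p (m + 2) ++ p (m + 1) = q (m + 2) ++ q (m + 1) := by
      rcases List.suffix_or_suffix_of_suffix hsufp hsufq with hs | hs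
      · exact pair_eq I ep eq' hs
      · exact (pair_eq I eq' ep hs).symm
    unfold WEquiv
    rw [h2p, h2q, hpair, hprev]

end CPS
end

section
/- Let p and q be equivalent walks of length n > 0 in the CPS graph Γ(A) with deg(p_0) ≥ deg(q_0). Then deg(p_i) ≥ deg(q_i) for all even i with 0 < i ≤ n, and deg(q_i) ≥ deg(p_i) for all odd i with 0 < i ≤ n. -/
namespace CPS

variable {σ : Type}

lemma MonIdeal.Mem.append_right {I : MonIdeal σ} {m : Mon σ} (h : I.Mem m) (c : Mon σ) :
    I.Mem (m ++ c) := by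
  obtain ⟨a, r, b, hr, rfl⟩ := h
  exact ⟨a, r, b ++ c, hr, by simp⟩

lemma MonIdeal.Mem.append_left {I : MonIdeal σ} {m : Mon σ} (h : I.Mem m) (c : Mon σ) :
    I.Mem (c ++ m) := by
  obtain ⟨a, r, b, hr, rfl⟩ := h
  exact ⟨c ++ a, r, b, hr, by simp⟩

/-- Remaining tensor product p_n ⊗ ⋯ ⊗ p_i. -/
def tl (n i : ℕ) (p : ℕ → Mon σ) : Mon σ :=
  ((((List.range (n+1)).drop i).map p).reverse).flatten

lemma tens_eq_tl (n : ℕ) (p : ℕ → Mon σ) : tens n p = tl n 0 p := by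
  simp [tens, tl]

lemma tl_succ (n i : ℕ) (hi : i ≤ n) (p : ℕ → Mon σ) :
    tl n i p = tl n (i+1) p ++ p i := by
  have h : i < (List.range (n+1)).length := by simpa using Nat.lt_succ_of_le hi
  rw [tl, tl, List.drop_eq_getElem_cons h, List.getElem_range]
  simp

/-- Even → odd step. -/
lemma step1 {I : MonIdeal σ} {a b a' b' u X Y : Mon σ}
    (ha' : a' ∈ Ann I a) (hb' : b' ∈ Ann I b) (hab : a = u ++ b)
    (heq : Y ++ b' = X ++ a' ++ u) : b' = a' ++ u ∧ Y = X := by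
  obtain ⟨hna, hna', hIa, hmina⟩ := ha'
  obtain ⟨hnb, hnb', hIb, hminb⟩ := hb'
  have hIau : I.Mem ((a' ++ u) ++ b) := by
    simpa [hab, List.append_assoc] using hIa
  have hsb' : b' <:+ X ++ (a' ++ u) := by
    rw [← List.append_assoc, ← heq]; exact List.suffix_append Y b'
  have hsau : (a' ++ u) <:+ X ++ (a' ++ u) := List.suffix_append X (a' ++ u)
  have hb'eq : b' = a' ++ u := by
    rcases List.suffix_or_suffix_of_suffix hsb' hsau with hcase | hcase
    · -- b' <:+ a' ++ u
      have hsu : u <:+ a' ++ u := List.suffix_append a' u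
      rcases List.suffix_or_suffix_of_suffix hcase hsu with hcu | hcu
      · -- b' <:+ u : contradiction with ¬ I.Mem a
        obtain ⟨t, ht⟩ := hcu
        exfalso
        apply hna
        have : I.Mem (t ++ (b' ++ b)) := hIb.append_left t
        simpa [hab, ← ht, List.append_assoc] using this
      · -- u <:+ b'
        obtain ⟨v, hv⟩ := hcu
        obtain ⟨w, hw⟩ := hcase
        have hwv : w ++ v = a' := by
          apply List.append_cancel_right (bs := u)
          rw [List.append_assoc, hv, hw]
        by_cases hva : v = a'
        · rw [← hv, hva]
        · exfalso
          apply hmina v ⟨w, hwv⟩ hva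
          have : I.Mem (b' ++ b) := hIb
          rw [← hv] at this
          simpa [hab, List.append_assoc] using this
    · -- a' ++ u <:+ b'
      obtain ⟨w, hw⟩ := hcase
      by_cases hwn : w = []
      · simp [hwn] at hw; exact hw.symm
      · exfalso
        apply hminb (a' ++ u) ⟨w, hw⟩ (fun hcon => hwn (by
          have : w ++ (a' ++ u) = [] ++ (a' ++ u) := by simpa using hw.trans hcon.symm
          exact List.append_cancel_right this)) hIau
  refine ⟨hb'eq, ?_⟩
  apply List.append_cancel_right (bs := b')
  rw [heq, hb'eq, List.append_assoc]

/-- Odd → even step. -/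
lemma step2 {I : MonIdeal σ} {a b a' b' u X Y : Mon σ}
    (ha' : a' ∈ Ann I a) (hb' : b' ∈ Ann I b) (hab : b = a ++ u)
    (heq : X ++ a' = Y ++ b') : ∃ w, a' = w ++ b' ∧ Y = X ++ w := by
  obtain ⟨hna, hna', hIa, hmina⟩ := ha'
  obtain ⟨hnb, hnb', hIb, hminb⟩ := hb'
  have hsa : a' <:+ X ++ a' := List.suffix_append X a'
  have hsb : b' <:+ X ++ a' := by rw [heq]; exact List.suffix_append Y b'
  rcases List.suffix_or_suffix_of_suffix hsa hsb with hcase | hcase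
  · -- a' <:+ b'
    by_cases hab' : a' = b'
    · refine ⟨[], by simp [hab'], ?_⟩
      simp only [List.nil_append, List.append_nil]
      exact List.append_cancel_right (by rw [heq, hab'])
    · exfalso
      apply hminb a' hcase hab'
      have := hIa.append_right u
      simpa [hab, List.append_assoc] using this
  · -- b' <:+ a'
    obtain ⟨w, hw⟩ := hcase
    refine ⟨w, hw.symm, ?_⟩
    apply List.append_cancel_right (bs := b')
    rw [← heq, ← hw, List.append_assoc]

/-- Lemma 2.7(4): degree comparison along equivalent walks. -/
theorem stmt3 {σ : Type} (I : MonIdeal σ) (n : ℕ) (hn : 0 < n) (p q : ℕ → Mon σ)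
    (hp : IsWalk I n p) (hq : IsWalk I n q) (h : WEquiv n p q)
    (hdeg : (q 0).length ≤ (p 0).length) :
    ∀ i : ℕ, 0 < i → i ≤ n →
      (Even i → (q i).length ≤ (p i).length) ∧
      (Odd i → (p i).length ≤ (q i).length) := by
  have key : ∀ i, i ≤ n →
      (Even i → ∃ u, p i = u ++ q i ∧ tl n (i+1) q = tl n (i+1) p ++ u) ∧
      (Odd i → ∃ u, q i = p i ++ u ∧ tl n (i+1) p = tl n (i+1) q) := by
    intro i
    induction i with
    | zero =>
      intro _
      refine ⟨fun _ => ?_, fun hodd => absurd hodd (by simp)⟩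
      have htens : tl n 1 p ++ p 0 = tl n 1 q ++ q 0 := by
        rw [← tl_succ n 0 (Nat.zero_le n) p, ← tl_succ n 0 (Nat.zero_le n) q,
          ← tens_eq_tl, ← tens_eq_tl]
        exact h
      have hsp : p 0 <:+ tl n 1 p ++ p 0 := List.suffix_append _ _
      have hsq : q 0 <:+ tl n 1 p ++ p 0 := by rw [htens]; exact List.suffix_append _ _
      have hsuf : q 0 <:+ p 0 := by
        rcases List.suffix_or_suffix_of_suffix hsq hsp with hc | hc
        · exact hc
        · have := hc.eq_of_length (le_antisymm (hc.length_le) hdeg)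
          rw [this]
      obtain ⟨u, hu⟩ := hsuf
      refine ⟨u, hu.symm, ?_⟩
      apply List.append_cancel_right (bs := q 0)
      rw [← htens, ← hu, ← List.append_assoc]
    | succ i ih =>
      intro hle
      have hi : i ≤ n := Nat.le_of_succ_le hle
      have hiltn : i < n := hle
      have hedgep : p (i+1) ∈ Ann I (p i) := hp.2 i hiltn
      have hedgeq : q (i+1) ∈ Ann I (q i) := hq.2 i hiltn
      constructor
      · -- Even (i+1), so Odd i : use step2
        intro hev
        have hodd : Odd i := by
          rcases Nat.even_or_odd i with he | ho
          · exact absurd hev (by simpa [Nat.even_add_one] using he)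
          · exact ho
        obtain ⟨u, hqp, htl⟩ := (ih hi).2 hodd
        rw [tl_succ n (i+1) hle p, tl_succ n (i+1) hle q] at htl
        obtain ⟨w, hw, hY⟩ := step2 hedgep hedgeq hqp htl
        exact ⟨w, hw, by rw [hY]⟩
      · -- Odd (i+1), so Even i : use step1
        intro hodd
        have hev : Even i := by
          rcases Nat.even_or_odd i with he | ho
          · exact he
          · exact absurd hodd (by simpa [Nat.odd_add_one] using ho)
        obtain ⟨u, hpq, htl⟩ := (ih hi).1 hev
        rw [tl_succ n (i+1) hle p, tl_succ n (i+1) hle q] at htl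
        have htl' : tl n (i+2) q ++ q (i+1) = tl n (i+2) p ++ p (i+1) ++ u := by
          rw [htl]
        obtain ⟨hb', hY⟩ := step1 hedgep hedgeq hpq htl'
        exact ⟨u, hb', hY.symm⟩
  intro i _ hin
  constructor
  · intro hev
    obtain ⟨u, hu, -⟩ := (key i hin).1 hev
    simp [hu]
  · intro hodd
    obtain ⟨u, hu, -⟩ := (key i hin).2 hodd
    simp [hu]
end CPS
end

section
/- Let A be a monomial k-algebra. The Gelfand–Kirillov dimension of E(A) = Ext_A(k,k) is infinite if and only if the CPS graph Γ(A) contains two distinct directed circuits sharing a common vertex. -/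
namespace CPS
/-- A circuit of length n: a closed walk whose first n vertices are distinct. -/
def IsCircuit {σ : Type} (I : MonIdeal σ) (n : ℕ) (p : ℕ → Mon σ) : Prop :=
  0 < n ∧ IsWalk I n p ∧ p n = p 0 ∧ ∀ i < n, ∀ j < n, p i = p j → i = j

/-- The set of directed edges traversed by a walk of length n. -/
def edgeSet {σ : Type} (n : ℕ) (p : ℕ → Mon σ) : Set (Mon σ × Mon σ) :=
  {e | ∃ i < n, e = (p i, p (i+1))}

/-- Two distinct circuits of Γ(A) sharing a common vertex. -/
def TwoCircuits {σ : Type} (I : MonIdeal σ) : Prop :=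
  ∃ n p m q, IsCircuit I n p ∧ IsCircuit I m q ∧
    (∃ i < n, ∃ j < m, p i = q j) ∧ edgeSet n p ≠ edgeSet m q
/-- Anchored walks of length n in Γ(A), recorded as lists of their vertices. -/
def AWalks {σ : Type} (I : MonIdeal σ) (n : ℕ) : Set (List (Mon σ)) :=
  {l | ∃ p : ℕ → Mon σ, IsWalk I n p ∧ Anchored p ∧ l = (List.range (n+1)).map p}

/-- The number of anchored walks of length n, i.e. dim Ext_A^{n+1}(k,k). -/
noncomputable def growth {σ : Type} (I : MonIdeal σ) (n : ℕ) : ℕ :=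
  Set.ncard (AWalks I n)

section Sequences

variable {α : Type*}

theorem idxOf_map_range_eq_iff [BEq α] [LawfulBEq α] (p : ℕ → α) {n t : ℕ} (ht : t ≤ n)
    (x : α) : ((List.range (n + 1)).map p).idxOf x = t ↔ p t = x ∧ ∀ s < t, p s ≠ x := by
  rw [List.idxOf, List.findIdx_eq (by simp; omega)]
  simp

/-- A vertex seen for the first time is pinned down by its first-visit time, and a revisited
one is the unique `R`-successor of its predecessor. -/
theorem eqOn_of_firstVisit_iff {R : α → α → Prop} (hR : ∀ x y z, R x y → R x z → y = z)
    {n : ℕ} {p q : ℕ → α}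
    (hp : ∀ s t, s ≤ t → t < n → p s = p (t + 1) → R (p t) (p (t + 1)))
    (hq : ∀ s t, s ≤ t → t < n → q s = q (t + 1) → R (q t) (q (t + 1)))
    (hpq : ∀ x, ∀ t ≤ n, (p t = x ∧ ∀ s < t, p s ≠ x) ↔ (q t = x ∧ ∀ s < t, q s ≠ x)) :
    ∀ t ≤ n, p t = q t := by
  intro t
  induction t using Nat.strong_induction_on with
  | _ t ih =>
  intro ht
  by_cases hpnew : ∀ s < t, p s ≠ p t
  · exact ((hpq _ t ht).mp ⟨rfl, hpnew⟩).1.symm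
  by_cases hqnew : ∀ s < t, q s ≠ q t
  · exact ((hpq _ t ht).mpr ⟨rfl, hqnew⟩).1
  push Not at hpnew hqnew
  obtain ⟨s, hs, hps⟩ := hpnew
  obtain ⟨s', hs', hqs⟩ := hqnew
  obtain ⟨t, rfl⟩ : ∃ t', t = t' + 1 := ⟨t - 1, by omega⟩
  have hRq := hq s' t (by omega) (by omega) hqs
  rw [← ih t (by omega) (by omega)] at hRq
  exact hR _ _ _ (hp s t (by omega) (by omega) hps) hRq

def cutLoop (q : ℕ → α) (s d : ℕ) : ℕ → α := fun u => if u ≤ s then q u else q (u + d)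

theorem cutLoop_of_le {q : ℕ → α} {s d u : ℕ} (hsd : q s = q (s + d)) (hu : s ≤ u) :
    cutLoop q s d u = q (u + d) := by
  rcases hu.lt_or_eq with hu | rfl
  · simp [cutLoop, hu.not_ge]
  · simpa [cutLoop] using hsd

def concatAt (w : ℕ → α) (L : ℕ) (u : ℕ → α) : ℕ → α :=
  fun t => if t ≤ L then w t else u (t - L)

theorem concatAt_of_le {w u : ℕ → α} {L t : ℕ} (h : w L = u 0) (ht : L ≤ t) :
    concatAt w L u t = u (t - L) := by
  rcases ht.lt_or_eq with ht | rfl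
  · simp [concatAt, ht.not_ge]
  · simpa [concatAt] using h

def rotate (n i : ℕ) (p : ℕ → α) : ℕ → α := fun t => p ((i + t) % n)

theorem apply_add_one_mod_of_closed {n : ℕ} {p : ℕ → α} (hn : 0 < n) (hc : p n = p 0)
    (s : ℕ) : p ((s + 1) % n) = p (s % n + 1) := by
  rw [← Nat.mod_add_mod]
  obtain h | h : s % n + 1 < n ∨ s % n + 1 = n := by have := Nat.mod_lt s hn; omega
  · rw [Nat.mod_eq_of_lt h]
  · rw [h, Nat.mod_self, hc]

theorem rotate_mul {n i : ℕ} (p : ℕ → α) (hi : i < n) (k : ℕ) : rotate n i p (n * k) = p i := by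
  rw [rotate, mul_comm, Nat.add_mul_mod_self_right, Nat.mod_eq_of_lt hi]

def splice (b : Bool → ℕ → α) (ℓ : ℕ) (s : ℕ → Bool) : ℕ → α :=
  fun t => b (s (t / ℓ)) (t % ℓ)

variable {b : Bool → ℕ → α} {ℓ : ℕ}

theorem splice_mul_add (s : ℕ → Bool) (k : ℕ) {t : ℕ} (ht : t < ℓ) :
    splice b ℓ s (ℓ * k + t) = b (s k) t := by
  have hℓ : 0 < ℓ := by omega
  simp [splice, Nat.mul_add_div hℓ, Nat.div_eq_of_lt ht, Nat.mod_eq_of_lt ht]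

theorem splice_edge {r : α → α → Prop} (hℓ : 0 < ℓ) (hb : ∀ c c', b c ℓ = b c' 0)
    (hr : ∀ c t, r (b c t) (b c (t + 1))) (s : ℕ → Bool) (u : ℕ) :
    r (splice b ℓ s u) (splice b ℓ s (u + 1)) := by
  obtain ⟨k, t, ht, rfl⟩ : ∃ k t, t < ℓ ∧ u = ℓ * k + t :=
    ⟨u / ℓ, u % ℓ, Nat.mod_lt u hℓ, (Nat.div_add_mod u ℓ).symm⟩
  rw [splice_mul_add s k ht]
  rcases Nat.lt_or_eq_of_le (ht : t + 1 ≤ ℓ) with h | rfl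
  · rw [Nat.add_assoc, splice_mul_add s k h]
    exact hr _ _
  · rw [show (t + 1) * k + t + 1 = (t + 1) * (k + 1) + 0 by ring, splice_mul_add s _ hℓ,
      ← hb (s k)]
    exact hr _ _

end Sequences

section Growth

theorem sum_range_le_of_le_pow {g : ℕ → ℕ} {M : ℕ} (hg : ∀ n, g n ≤ (n + 2) ^ M) (n : ℕ) :
    (Finset.range (n + 1)).sum g ≤ 2 ^ M * (n + 1) ^ (M + 1) :=
  calc (Finset.range (n + 1)).sum g ≤ (Finset.range (n + 1)).sum fun _ => (2 * (n + 1)) ^ M :=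
        Finset.sum_le_sum fun i hi => (hg i).trans (Nat.pow_le_pow_left (by simp at hi; omega) M)
    _ = 2 ^ M * (n + 1) ^ (M + 1) := by simp [mul_pow]; ring

theorem exists_mul_pow_lt_two_pow (C d : ℕ) : ∃ k, C * (k + 1) ^ d < 2 ^ k := by
  obtain ⟨m, hm⟩ : ∃ m, m = C * (d + 1) ^ d := ⟨_, rfl⟩
  refine ⟨(d + 1) * m, ?_⟩
  calc C * ((d + 1) * m + 1) ^ d ≤ C * ((d + 1) * (m + 1)) ^ d := by gcongr; nlinarith
    _ = m * (m + 1) ^ d := by rw [mul_pow, ← mul_assoc, ← hm]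
    _ < (m + 1) * (m + 1) ^ d := Nat.mul_lt_mul_of_pos_right (Nat.lt_succ_self m) (by positivity)
    _ = (m + 1) ^ (d + 1) := by ring
    _ ≤ (2 ^ m) ^ (d + 1) := Nat.pow_le_pow_left Nat.lt_two_pow_self (d + 1)
    _ = 2 ^ ((d + 1) * m) := by rw [← pow_mul, mul_comm]

theorem not_poly_bounded_of_two_pow_le {g : ℕ → ℕ} {L ℓ : ℕ}
    (hg : ∀ k, 2 ^ k ≤ g (L + ℓ * k)) :
    ¬ ∃ c d : ℕ, ∀ n, (Finset.range (n + 1)).sum g ≤ c * (n + 1) ^ d := by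
  rintro ⟨c, d, hcd⟩
  obtain ⟨k, hk⟩ := exists_mul_pow_lt_two_pow (c * (L + ℓ + 1) ^ d) d
  refine hk.not_ge ?_
  calc 2 ^ k ≤ g (L + ℓ * k) := hg k
    _ ≤ (Finset.range (L + ℓ * k + 1)).sum g :=
        Finset.single_le_sum (fun _ _ => Nat.zero_le _) (Finset.self_mem_range_succ _)
    _ ≤ c * (L + ℓ * k + 1) ^ d := hcd _
    _ ≤ c * ((L + ℓ + 1) * (k + 1)) ^ d := by gcongr; nlinarith
    _ = c * (L + ℓ + 1) ^ d * (k + 1) ^ d := by rw [mul_pow, mul_assoc]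

end Growth

variable {σ : Type} {I : MonIdeal σ}

theorem exists_prefix_of_mem_ann {m w : Mon σ} (hw : w ∈ Ann I m) : ∃ r ∈ I.gens, w <+: r := by
  obtain ⟨hm, hwI, ⟨a, r, b, hr, hwm⟩, hmin⟩ := hw
  rw [List.append_assoc] at hwm
  obtain ⟨a', -, rfl⟩ | ⟨c, rfl, hc⟩ := List.append_eq_append_iff.mp hwm
  · exact absurd ⟨a', r, b, hr, by simp⟩ hm
  have hca : c = a ++ c := by
    by_contra hne
    exact hmin c (List.suffix_append a c) hne ⟨[], r, b, hr, by simp [hc]⟩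
  rw [← hca] at hwI ⊢
  obtain ⟨d, rfl, -⟩ | ⟨d, rfl, -⟩ := List.append_eq_append_iff.mp hc
  · exact absurd ⟨[], r, d, hr, by simp⟩ hwI
  · exact ⟨_, hr, List.prefix_append c d⟩

def smallWords (I : MonIdeal σ) : Set (Mon σ) :=
  {w | w.length = 1 ∨ ∃ r ∈ I.gens, w <+: r}

theorem finite_smallWords [Finite σ] (I : MonIdeal σ) : (smallWords I).Finite := by
  refine ((List.finite_length_eq σ 1).union
    (I.gens.finite_toSet.biUnion fun r _ => r.inits.finite_toSet)).subset ?_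
  rintro w (hw | ⟨r, hr, hwr⟩)
  · exact Or.inl hw
  · exact Or.inr (Set.mem_biUnion hr (List.mem_inits _ _ |>.mpr hwr))

theorem Edge.mem_vertices {x y : Mon σ} (h : Edge I x y) (hx : x ∈ Vertices I) :
    y ∈ Vertices I := by
  obtain ⟨i, hi⟩ := Set.mem_iUnion.mp hx
  exact Set.mem_iUnion.mpr ⟨i + 1, Set.mem_biUnion hi h⟩

namespace IsWalk

variable {n : ℕ} {p : ℕ → Mon σ}

theorem mono (hp : IsWalk I n p) {m : ℕ} (hm : m ≤ n) : IsWalk I m p :=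
  ⟨hp.1, fun t ht => hp.2 t (by omega)⟩

theorem mem_vertices (hp : IsWalk I n p) {t : ℕ} (ht : t ≤ n) : p t ∈ Vertices I := by
  induction t with
  | zero => exact hp.1
  | succ t ih => exact (hp.2 t ht).mem_vertices (ih (by omega))

theorem shift (hp : IsWalk I n p) {k : ℕ} (hk : k ≤ n) : IsWalk I (n - k) (shift p k) :=
  ⟨hp.mem_vertices hk, fun t ht => hp.2 (k + t) (by omega)⟩

theorem mem_smallWords (hp : IsWalk I n p) (ha : Anchored p) :
    ∀ t ≤ n, p t ∈ smallWords I
  | 0, _ => Or.inl ha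
  | t + 1, ht => Or.inr (exists_prefix_of_mem_ann (hp.2 t (by omega)))

theorem cutLoop {m d s : ℕ} {q : ℕ → Mon σ} (hq : IsWalk I (m + d) q)
    (hsd : q s = q (s + d)) : IsWalk I m (cutLoop q s d) := by
  refine ⟨by simpa [CPS.cutLoop] using hq.1, fun u hu => ?_⟩
  rcases lt_or_ge u s with hus | hsu
  · simpa [CPS.cutLoop, hus.le, Nat.succ_le_of_lt hus] using hq.2 u (by omega)
  · rw [cutLoop_of_le hsd hsu, cutLoop_of_le hsd (by omega), Nat.add_right_comm]
    exact hq.2 (u + d) (by omega)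

theorem concatAt {L N : ℕ} {w u : ℕ → Mon σ} (hw : IsWalk I L w)
    (hu : ∀ t < N, Edge I (u t) (u (t + 1))) (h : w L = u 0) :
    IsWalk I (L + N) (concatAt w L u) := by
  refine ⟨by simpa [CPS.concatAt] using hw.1, fun t ht => ?_⟩
  rcases lt_or_ge t L with htL | hLt
  · simpa [CPS.concatAt, htL.le, Nat.succ_le_of_lt htL] using hw.2 t htL
  · rw [concatAt_of_le h hLt, concatAt_of_le h (by omega), Nat.sub_add_comm hLt]
    exact hu _ (by omega)

theorem rotate_edge (hp : IsWalk I n p) (hn : 0 < n) (hc : p n = p 0) (i t : ℕ) :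
    Edge I (rotate n i p t) (rotate n i p (t + 1)) := by
  rw [rotate, rotate, ← Nat.add_assoc, apply_add_one_mod_of_closed hn hc]
  exact hp.2 _ (Nat.mod_lt _ hn)

end IsWalk

theorem finite_aWalks [Finite σ] (I : MonIdeal σ) (n : ℕ) : (AWalks I n).Finite := by
  have := (finite_smallWords I).to_subtype
  refine (Set.finite_range fun f : Fin (n + 1) → smallWords I =>
    List.ofFn fun t => (f t).1).subset ?_
  rintro _ ⟨p, hp, ha, rfl⟩
  refine ⟨fun t => ⟨p t, hp.mem_smallWords ha t (by omega)⟩, ?_⟩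
  apply List.ext_getElem (by simp)
  intro t _ _
  simp only [List.getElem_ofFn, List.getElem_map, List.getElem_range]

theorem exists_anchored_walk {v : Mon σ} (hv : v ∈ Vertices I) :
    ∃ L w, IsWalk I L w ∧ Anchored w ∧ w L = v := by
  obtain ⟨L, hL⟩ := Set.mem_iUnion.mp hv
  refine ⟨L, ?_⟩
  induction L generalizing v with
  | zero => exact ⟨fun _ => v, ⟨hv, fun t ht => absurd ht (Nat.not_lt_zero t)⟩, hL, rfl⟩
  | succ L ih =>
    obtain ⟨u, hu, huv⟩ := Set.mem_iUnion₂.mp hL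
    obtain ⟨w, hw, hwa, rfl⟩ := ih (Set.mem_iUnion.mpr ⟨L, hu⟩) hu
    refine ⟨concatAt w L fun t => if t = 0 then w L else v, hw.concatAt (N := 1) ?_ (by simp),
      by simpa [CPS.concatAt, Anchored] using hwa, by simp [CPS.concatAt]⟩
    intro t ht
    obtain rfl : t = 0 := by omega
    simpa [Edge] using huv

theorem edgeSet_congr {N : ℕ} {p q : ℕ → Mon σ} (h : ∀ t ≤ N, p t = q t) :
    edgeSet N p = edgeSet N q := by
  ext e
  constructor <;> rintro ⟨t, ht, rfl⟩ <;> exact ⟨t, ht, by rw [h t ht.le, h (t + 1) ht]⟩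

theorem edgeSet_rotate {n : ℕ} {p : ℕ → Mon σ} (hn : 0 < n) (hc : p n = p 0) {i N : ℕ}
    (hi : i < n) (hN : n ≤ N) : edgeSet N (rotate n i p) = edgeSet n p := by
  ext e
  constructor
  · rintro ⟨t, -, rfl⟩
    refine ⟨(i + t) % n, Nat.mod_lt _ hn, ?_⟩
    simp only [rotate, ← Nat.add_assoc, apply_add_one_mod_of_closed hn hc]
  · rintro ⟨s, hs, rfl⟩
    refine ⟨(s + n - i) % n, (Nat.mod_lt _ hn).trans_le hN, ?_⟩
    have h : (i + (s + n - i) % n) % n = s := by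
      rw [Nat.add_mod_mod, show i + (s + n - i) = s + n by omega, Nat.add_mod_right,
        Nat.mod_eq_of_lt hs]
    simp only [rotate, ← Nat.add_assoc, apply_add_one_mod_of_closed hn hc, h]

def CircuitEdge (I : MonIdeal σ) (x y : Mon σ) : Prop :=
  ∃ n p, IsCircuit I n p ∧ (x, y) ∈ edgeSet n p

theorem CircuitEdge.unique (hI : ¬ TwoCircuits I) {x y z : Mon σ} (hy : CircuitEdge I x y)
    (hz : CircuitEdge I x z) : y = z := by
  obtain ⟨n, p, hp, i, hi, hxy⟩ := hy
  obtain ⟨m, q, hq, j, hj, hxz⟩ := hz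
  simp only [Prod.mk.injEq] at hxy hxz
  have hpq : edgeSet n p = edgeSet m q := by
    by_contra hne
    exact hI ⟨n, p, m, q, hp, hq, ⟨i, hi, j, hj, hxy.1.symm.trans hxz.1⟩, hne⟩
  obtain ⟨i', hi', hxz'⟩ : (x, z) ∈ edgeSet n p := hpq ▸ ⟨j, hj, by rw [hxz.1, hxz.2]⟩
  simp only [Prod.mk.injEq] at hxz'
  obtain rfl := hp.2.2.2 i' hi' i hi (hxz'.1.symm.trans hxy.1)
  exact hxy.2.trans hxz'.2.symm

theorem IsWalk.circuitEdge_of_closed {m : ℕ} {q : ℕ → Mon σ} (hq : IsWalk I m q) (hm : 0 < m)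
    (hc : q m = q 0) : CircuitEdge I (q (m - 1)) (q m) := by
  induction m using Nat.strong_induction_on generalizing q with
  | _ m ih =>
  by_cases hinj : ∀ s < m, ∀ t < m, q s = q t → s = t
  · exact ⟨m, q, ⟨hm, hq, hc, hinj⟩, m - 1, by omega, by rw [Nat.sub_add_cancel hm]⟩
  push Not at hinj
  obtain ⟨s, t, hst, ht, hqst⟩ : ∃ s t, s < t ∧ t < m ∧ q s = q t := by
    obtain ⟨s, hs, t, ht, h, hne⟩ := hinj
    rcases lt_or_gt_of_ne hne with h' | h'
    exacts [⟨s, t, h', ht, h⟩, ⟨t, s, h', hs, h.symm⟩]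
  obtain ⟨m, d, rfl, rfl⟩ : ∃ m' d, m = m' + d ∧ t = s + d :=
    ⟨m - (t - s), t - s, by omega, by omega⟩
  have hcut := ih m (by omega) (hq.cutLoop hqst) (by omega)
    (by rw [cutLoop_of_le hqst (by omega), hc]; simp [CPS.cutLoop])
  rwa [cutLoop_of_le hqst (by omega), cutLoop_of_le hqst (by omega),
    show m - 1 + d = m + d - 1 by omega] at hcut

theorem IsWalk.circuitEdge_of_revisit {n : ℕ} {p : ℕ → Mon σ} (hp : IsWalk I n p) {s t : ℕ}
    (hst : s ≤ t) (ht : t < n) (hrev : p s = p (t + 1)) : CircuitEdge I (p t) (p (t + 1)) := by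
  have h := ((hp.mono ht).shift (k := s) (by omega)).circuitEdge_of_closed (by omega)
    (by simp [CPS.shift, show s + (t + 1 - s) = t + 1 by omega, hrev])
  simp only [CPS.shift] at h
  rwa [show s + (t + 1 - s - 1) = t by omega, show s + (t + 1 - s) = t + 1 by omega] at h

/-- The code of an anchored walk records, for each small word, the index of its first visit
(`n + 1` if never visited). -/
theorem growth_le_of_not_twoCircuits [Finite σ] (hI : ¬ TwoCircuits I) (n : ℕ) :
    growth I n ≤ (n + 2) ^ Nat.card (smallWords I) := by
  classical
  have := (finite_smallWords I).to_subtype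
  have hlen : ∀ l ∈ AWalks I n, l.length = n + 1 := by rintro _ ⟨p, -, -, rfl⟩; simp
  let code (l : AWalks I n) (x : smallWords I) : Fin (n + 2) :=
    ⟨l.1.idxOf x.1, Nat.lt_succ_of_le (List.idxOf_le_length.trans (hlen l.1 l.2).le)⟩
  have hcode : Function.Injective code := by
    rintro ⟨_, p, hp, hpa, rfl⟩ ⟨_, q, hq, hqa, rfl⟩ hpq
    have hfirst : ∀ x, ∀ t ≤ n,
        (p t = x ∧ ∀ s < t, p s ≠ x) ↔ (q t = x ∧ ∀ s < t, q s ≠ x) := by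
      intro x t ht
      by_cases hx : x ∈ smallWords I
      · have h : ((List.range (n + 1)).map p).idxOf x = ((List.range (n + 1)).map q).idxOf x :=
          congrArg Fin.val (congrFun hpq ⟨x, hx⟩)
        rw [← idxOf_map_range_eq_iff p ht, ← idxOf_map_range_eq_iff q ht, h]
      · exact iff_of_false (fun h => hx (h.1 ▸ hp.mem_smallWords hpa t ht))
          (fun h => hx (h.1 ▸ hq.mem_smallWords hqa t ht))
    have hpq := eqOn_of_firstVisit_iff (R := CircuitEdge I) (fun _ _ _ => CircuitEdge.unique hI)
      (fun s t => hp.circuitEdge_of_revisit (s := s) (t := t))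
      (fun s t => hq.circuitEdge_of_revisit (s := s) (t := t)) hfirst
    exact Subtype.ext (List.map_congr_left fun t ht => hpq t (by simp at ht; omega))
  calc growth I n = Nat.card (AWalks I n) := (Nat.card_coe_set_eq _).symm
    _ ≤ Nat.card (smallWords I → Fin (n + 2)) := Nat.card_le_card_of_injective code hcode
    _ = (n + 2) ^ Nat.card (smallWords I) := by simp [Nat.card_fun]

theorem two_pow_le_growth_of_closed_walks [Finite σ] {v : Mon σ} {b : Bool → ℕ → Mon σ}
    {ℓ t₀ : ℕ} (hv : v ∈ Vertices I) (hb0 : ∀ c, b c 0 = v) (hbℓ : ∀ c, b c ℓ = v)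
    (hbE : ∀ c t, Edge I (b c t) (b c (t + 1))) (ht₀ : t₀ < ℓ)
    (hdiff : b false t₀ ≠ b true t₀) : ∃ L, ∀ k, 2 ^ k ≤ growth I (L + ℓ * k) := by
  obtain ⟨L, w, hw, hwa, hwv⟩ := exists_anchored_walk hv
  refine ⟨L, fun k => ?_⟩
  let W (s : ℕ → Bool) : ℕ → Mon σ := concatAt w L (splice b ℓ s)
  have hjoin (s : ℕ → Bool) : w L = splice b ℓ s 0 := by simpa [splice, hb0] using hwv
  have hW (s : ℕ → Bool) : IsWalk I (L + ℓ * k) (W s) :=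
    hw.concatAt (fun t _ => splice_edge (by omega)
      (fun c c' => (hbℓ c).trans (hb0 c').symm) hbE s t) (hjoin s)
  have hWa (s : ℕ → Bool) : Anchored (W s) := by simpa [W, CPS.concatAt, Anchored] using hwa
  have hW_apply (s : ℕ → Bool) (j : ℕ) : W s (L + (ℓ * j + t₀)) = b (s j) t₀ := by
    simp only [W]
    rw [concatAt_of_le (hjoin s) (Nat.le_add_right _ _), Nat.add_sub_cancel_left,
      splice_mul_add _ _ ht₀]
  let ext (s : Fin k → Bool) (t : ℕ) : Bool := if h : t < k then s ⟨t, h⟩ else false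
  have hinj : Function.Injective fun s =>
      (⟨_, W (ext s), hW _, hWa _, rfl⟩ : AWalks I (L + ℓ * k)) := by
    intro s₁ s₂ h
    funext j
    have hval := List.map_inj_left.mp (congrArg Subtype.val h) (L + (ℓ * j + t₀))
      (List.mem_range.mpr (by nlinarith [j.2]))
    rw [hW_apply, hW_apply] at hval
    simpa [ext] using (Bool.injective_iff (f := fun c => b c t₀)).mpr hdiff hval
  have := (finite_aWalks I (L + ℓ * k)).to_subtype
  calc 2 ^ k = Nat.card (Fin k → Bool) := by simp
    _ ≤ Nat.card (AWalks I (L + ℓ * k)) := Nat.card_le_card_of_injective _ hinj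
    _ = growth I (L + ℓ * k) := Nat.card_coe_set_eq _

/-- Going `m` times around the first circuit and `n` times around the second gives two closed
walks of length `n * m` at the common vertex; they differ because their edge sets do. -/
theorem exists_two_pow_le_growth [Finite σ] (hI : TwoCircuits I) :
    ∃ L ℓ, ∀ k, 2 ^ k ≤ growth I (L + ℓ * k) := by
  obtain ⟨n, p, m, q, ⟨hn, hp, hpc, -⟩, ⟨hm, hq, hqc, -⟩, ⟨i, hi, j, hj, hv⟩, hne⟩ := hI
  let b (c : Bool) : ℕ → Mon σ := cond c (rotate n i p) (rotate m j q)
  have hb0 : ∀ c, b c 0 = p i := by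
    rintro (_ | _) <;> simp [b, rotate, Nat.mod_eq_of_lt, hi, hj, hv]
  have hbℓ : ∀ c, b c (n * m) = p i := by
    rintro (_ | _)
    · simpa [b, mul_comm n m, hv] using rotate_mul q hj n
    · exact rotate_mul p hi m
  have hbE : ∀ c t, Edge I (b c t) (b c (t + 1)) := by
    rintro (_ | _) t
    exacts [hq.rotate_edge hm hqc j t, hp.rotate_edge hn hpc i t]
  obtain ⟨t₀, ht₀, hdiff⟩ : ∃ t₀ < n * m, b false t₀ ≠ b true t₀ := by
    by_contra! h
    apply hne
    rw [← edgeSet_rotate hn hpc hi (Nat.le_mul_of_pos_right n hm),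
      ← edgeSet_rotate hm hqc hj (Nat.le_mul_of_pos_left m hn)]
    refine edgeSet_congr fun t ht => ?_
    rcases ht.lt_or_eq with ht | rfl
    exacts [(h t ht).symm, (hbℓ true).trans (hbℓ false).symm]
  obtain ⟨L, hL⟩ := two_pow_le_growth_of_closed_walks (hp.mem_vertices hi.le) hb0 hbℓ hbE ht₀ hdiff
  exact ⟨L, n * m, hL⟩

/-- `GKdim E(A) < ∞` iff the partial sums of `dim E^i` are polynomially bounded. -/
theorem stmt10 {σ : Type} [Finite σ] (I : MonIdeal σ) :
    (¬ ∃ c d : ℕ, ∀ n : ℕ,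
        (Finset.range (n+1)).sum (growth I) ≤ c * (n+1) ^ d) ↔
      TwoCircuits I := by
  refine ⟨fun hunbounded => ?_, fun hI => ?_⟩
  · by_contra hI
    exact hunbounded ⟨_, _, sum_range_le_of_le_pow (growth_le_of_not_twoCircuits hI)⟩
  · obtain ⟨L, ℓ, h⟩ := exists_two_pow_le_growth hI
    exact not_poly_bounded_of_two_pow_le h
end CPS
end

section
/- Let A be a monomial k-algebra. The Hilbert series of the Yoneda algebra E(A) = Ext_A(k,k) (in the cohomological grading) is a rational function. -/
/-!
Every vertex of `Γ(A)` reached by an edge is a minimal left annihilator, hence no longer than the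
longest relation of `I`; so anchored walks live in a finite graph with adjacency matrix `M`. The
number of anchored walks of length `n` is `u ⬝ᵥ Mⁿ 1`, and `(1 - tM) ∑ₙ Mⁿ tⁿ = 1` shows that
`∑ₙ Mⁿ tⁿ = adj (1 - tM) / det (1 - tM)`, with `det (1 - tM) = 1` at `t = 0`.
-/
namespace Matrix

open PowerSeries

variable {ι R : Type*} [Fintype ι] [DecidableEq ι] [CommRing R] (M : Matrix ι ι R)

noncomputable def powSeries : Matrix ι ι (PowerSeries R) := of fun i j => mk fun n => (M ^ n) i j

theorem one_sub_X_smul_mul_powSeries :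
    (1 - (X : PowerSeries R) • M.map C) * M.powSeries = 1 := by
  have hshift : M.powSeries = 1 + (X : PowerSeries R) • (M.map C * M.powSeries) := by
    ext i j (_ | n)
    · by_cases h : i = j <;> simp [powSeries, h]
    · simp [powSeries, coeff_succ_X_mul, mul_apply, map_sum, one_apply, apply_ite, pow_succ']
  rw [sub_mul, one_mul, smul_mul]
  exact sub_eq_of_eq_add hshift

theorem powSeries_apply_mul_charpolyRev (i j : ι) :
    M.powSeries i j * M.charpolyRev =
      ((1 - (Polynomial.X : Polynomial R) • M.map Polynomial.C).adjugate i j : PowerSeries R) := by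
  set f := Polynomial.coeToPowerSeries.ringHom (R := R)
  set N := 1 - (Polynomial.X : Polynomial R) • M.map Polynomial.C
  have hN : f.mapMatrix N = 1 - (X : PowerSeries R) • M.map C := by
    ext a b : 1
    simp [N, f, one_apply, apply_ite, X_mul]
  have key : f.mapMatrix N.adjugate = f M.charpolyRev • M.powSeries := calc
    f.mapMatrix N.adjugate = f.mapMatrix N.adjugate * (f.mapMatrix N * M.powSeries) := by
      rw [hN, one_sub_X_smul_mul_powSeries, Matrix.mul_one]
    _ = f M.charpolyRev • M.powSeries := by
      rw [RingHom.map_adjugate, ← Matrix.mul_assoc, adjugate_mul, charpolyRev, RingHom.map_det,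
        smul_mul, Matrix.one_mul]
  have := congrFun (congrFun key i) j
  simp only [RingHom.mapMatrix_apply, map_apply, smul_apply, smul_eq_mul, f,
    Polynomial.coeToPowerSeries.ringHom_apply] at this
  rw [this, mul_comm]

theorem exists_mk_dotProduct_pow_mulVec_mul_charpolyRev (u v : ι → R) :
    ∃ P : Polynomial R, mk (fun n => u ⬝ᵥ (M ^ n *ᵥ v)) * M.charpolyRev = P := by
  refine ⟨∑ i, ∑ j, Polynomial.C (u i * v j) *
    (1 - (Polynomial.X : Polynomial R) • M.map Polynomial.C).adjugate i j, ?_⟩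
  have hsum : mk (fun n => u ⬝ᵥ (M ^ n *ᵥ v)) =
      ∑ i, ∑ j, C (u i * v j) * M.powSeries i j := by
    ext n
    simp only [dotProduct, mulVec, Finset.mul_sum, coeff_mk, map_mul, powSeries, of_apply,
      mul_assoc, map_sum, coeff_C_mul]
    exact Finset.sum_congr rfl fun _ _ => Finset.sum_congr rfl fun _ _ => by ring
  simp only [← Polynomial.coeToPowerSeries.ringHom_apply, map_sum, map_mul]
  simp [hsum, Finset.sum_mul, mul_assoc, powSeries_apply_mul_charpolyRev]

end Matrix

namespace Relation

open Matrix

variable {α : Type*} [DecidableEq α] (R : Type*) [Semiring R]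
  (r : α → α → Prop) [DecidableRel r] (s : Finset α)

def chainsFrom (a : α) : ℕ → Finset (List α)
  | 0 => {[a]}
  | n + 1 => (s.filter (r a)).biUnion fun b =>
      (chainsFrom b n).map ⟨List.cons a, List.cons_injective⟩

variable {r s}

theorem head?_of_mem_chainsFrom {a : α} {n : ℕ} {l : List α} (hl : l ∈ chainsFrom r s a n) :
    l.head? = some a := by
  cases n with
  | zero => simp_all [chainsFrom]
  | succ n =>
    simp only [chainsFrom, Finset.mem_biUnion, Finset.mem_map] at hl
    obtain ⟨_, _, l', _, rfl⟩ := hl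
    rfl

theorem disjoint_chainsFrom {a b : α} (hab : a ≠ b) (n : ℕ) :
    Disjoint (chainsFrom r s a n) (chainsFrom r s b n) :=
  Finset.disjoint_left.mpr fun _ ha hb =>
    hab <| Option.some_injective _ <|
      (head?_of_mem_chainsFrom ha).symm.trans (head?_of_mem_chainsFrom hb)

theorem mem_chainsFrom (hs : ∀ a b, r a b → b ∈ s) {a : α} {n : ℕ} {l : List α} :
    l ∈ chainsFrom r s a n ↔ l.length = n + 1 ∧ l.head? = some a ∧ l.IsChain r := by
  induction n generalizing a l with
  | zero =>
    simp only [chainsFrom, Finset.mem_singleton, zero_add, List.length_eq_one_iff]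
    constructor
    · rintro rfl
      simp
    · rintro ⟨⟨b, rfl⟩, hb, -⟩
      simp_all
  | succ n ih =>
    simp only [chainsFrom, Finset.mem_biUnion, Finset.mem_filter, Finset.mem_map,
      Function.Embedding.coeFn_mk, ih]
    constructor
    · rintro ⟨b, ⟨-, hab⟩, l', ⟨hlen, hhead, hchain⟩, rfl⟩
      obtain ⟨l'', rfl⟩ : ∃ l'', l' = b :: l'' := List.head?_eq_some_iff.mp hhead
      simp_all
    · rintro ⟨hlen, hhead, hchain⟩
      obtain ⟨l', rfl⟩ := List.head?_eq_some_iff.mp hhead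
      obtain ⟨b, l'', rfl⟩ := List.exists_cons_of_length_eq_add_one (by simpa using hlen)
      rw [List.isChain_cons_cons] at hchain
      exact ⟨b, ⟨hs a b hchain.1, hchain.1⟩, _, ⟨by simpa using hlen, rfl, hchain.2⟩, rfl⟩

variable (r s)

def adjMatrix : Matrix s s R :=
  of fun a b => if r a b then 1 else 0

theorem adjMatrix_pow_mulVec_one (n : ℕ) (a : s) :
    (adjMatrix R r s ^ n *ᵥ 1) a = (chainsFrom r s a n).card := by
  induction n generalizing a with
  | zero => simp [chainsFrom]
  | succ n ih =>
    have hdisj : (↑(s.filter (r a)) : Set α).PairwiseDisjoint fun b =>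
        (chainsFrom r s b n).map ⟨List.cons (a : α), List.cons_injective⟩ :=
      fun b _ c _ hbc => (Finset.disjoint_map _).mpr (disjoint_chainsFrom hbc n)
    rw [pow_succ', ← mulVec_mulVec, chainsFrom, Finset.card_biUnion hdisj, mulVec, dotProduct]
    simp only [ih]
    simp only [adjMatrix, of_apply, ite_mul, one_mul, zero_mul, Finset.card_map, Nat.cast_sum]
    rw [Finset.sum_filter, ← Finset.sum_coe_sort s]

theorem card_biUnion_chainsFrom (p : α → Prop) [DecidablePred p] (n : ℕ) :
    (((s.filter p).biUnion (chainsFrom r s · n)).card : R) =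
      (fun a : s => if p a then 1 else 0) ⬝ᵥ (adjMatrix R r s ^ n *ᵥ 1) := by
  rw [Finset.card_biUnion fun a _ b _ hab => disjoint_chainsFrom hab n]
  simp only [dotProduct, adjMatrix_pow_mulVec_one, ite_mul, one_mul, zero_mul, Nat.cast_sum]
  rw [Finset.sum_filter, ← Finset.sum_coe_sort s]

end Relation

theorem List.exists_eq_map_range_iff {α : Type*} {r : α → α → Prop} {l : List α} {n : ℕ} {a : α} :
    (∃ p : ℕ → α, p 0 = a ∧ (∀ i < n, r (p i) (p (i + 1))) ∧ l = (range (n + 1)).map p) ↔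
      l.length = n + 1 ∧ l.head? = some a ∧ l.IsChain r := by
  constructor
  · rintro ⟨p, rfl, hp, rfl⟩
    refine ⟨by simp, by simp [List.range_succ_eq_map], ?_⟩
    rw [List.isChain_map, List.isChain_range_succ]
    exact hp
  · rintro ⟨hlen, hhead, hchain⟩
    have hl : l = (range (n + 1)).map (l.getD · a) :=
      List.ext_getElem (by simp [hlen]) fun i h₁ _ => by simp [List.getElem?_eq_getElem h₁]
    refine ⟨(l.getD · a), ?_, ?_, hl⟩
    · obtain ⟨l', rfl⟩ := List.head?_eq_some_iff.mp hhead
      rfl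
    · rw [hl, List.isChain_map, List.isChain_range_succ] at hchain
      exact hchain

namespace CPS

open Matrix

variable {σ : Type}

theorem exists_length_le_of_mem_Ann {I : MonIdeal σ} {m w : Mon σ} (hw : w ∈ Ann I m) :
    ∃ r ∈ I.gens, w.length ≤ r.length := by
  obtain ⟨hm, hwI, ⟨a, r, b, hr, hwm⟩, hmin⟩ := hw
  rw [List.append_assoc, List.append_eq_append_iff] at hwm
  obtain ⟨a', -, rfl⟩ | ⟨w', rfl, hrb⟩ := hwm
  · exact absurd ⟨a', r, b, hr, (List.append_assoc _ _ _).symm⟩ hm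
  -- the occurrence of `r` starts inside `w`, so by minimality it starts at the beginning of `w`
  obtain rfl : a = [] := by
    by_contra ha
    refine hmin w' (List.suffix_append a w') (by simpa using ha) ⟨[], r, b, hr, by simp [hrb]⟩
  rw [List.nil_append] at hwI ⊢
  rw [List.append_eq_append_iff] at hrb
  obtain ⟨c, rfl, -⟩ | ⟨c, rfl, -⟩ := hrb
  · exact absurd ⟨[], r, c, hr, by simp⟩ hwI
  · exact ⟨_, hr, by simp⟩

variable [Finite σ]

-- the `+ 1` keeps the words of length one when `I.gens` is empty
noncomputable def boundedWords (I : MonIdeal σ) : Finset (Mon σ) :=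
  (List.finite_length_le σ (I.gens.sup List.length + 1)).toFinset

theorem mem_boundedWords_of_edge {I : MonIdeal σ} {m w : Mon σ} (h : Edge I m w) :
    w ∈ boundedWords I := by
  obtain ⟨r, hr, hwr⟩ := exists_length_le_of_mem_Ann h
  simp only [boundedWords, Set.Finite.mem_toFinset, Set.mem_ofPred_eq]
  exact hwr.trans (Finset.le_sup hr) |>.trans (Nat.le_succ _)

theorem mem_boundedWords_of_length_eq_one {I : MonIdeal σ} {w : Mon σ} (h : w.length = 1) :
    w ∈ boundedWords I := by
  simp [boundedWords, h]

open scoped Classical in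
theorem AWalks_eq_biUnion_chainsFrom (I : MonIdeal σ) (n : ℕ) :
    AWalks I n = ↑(((boundedWords I).filter (·.length = 1)).biUnion
      (Relation.chainsFrom (Edge I) (boundedWords I) · n)) := by
  ext l
  simp only [AWalks, Set.mem_ofPred_eq, Finset.coe_biUnion, Finset.coe_filter, Set.mem_iUnion,
    Finset.mem_coe, Relation.mem_chainsFrom (fun _ _ => mem_boundedWords_of_edge),
    ← List.exists_eq_map_range_iff, IsWalk, Anchored]
  constructor
  · rintro ⟨p, ⟨-, hp⟩, h0, rfl⟩
    exact ⟨p 0, ⟨mem_boundedWords_of_length_eq_one h0, h0⟩, p, rfl, hp, rfl⟩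
  · rintro ⟨a, ⟨-, ha⟩, p, rfl, hp, rfl⟩
    exact ⟨p, ⟨Set.mem_iUnion.mpr ⟨0, ha⟩, hp⟩, ha, rfl⟩

open scoped Classical in
theorem growth_eq_dotProduct (R : Type*) [Semiring R] (I : MonIdeal σ) (n : ℕ) :
    (growth I n : R) = (fun a : boundedWords I => if a.1.length = 1 then 1 else 0) ⬝ᵥ
      (Relation.adjMatrix R (Edge I) (boundedWords I) ^ n *ᵥ 1) := by
  rw [growth, AWalks_eq_biUnion_chainsFrom, Set.ncard_coe_finset,
    Relation.card_biUnion_chainsFrom]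

/-- Corollary 2.9(4): the Hilbert series of E(A) in the cohomological grading
    (dim Ext^0 = 1, dim Ext^{i+1} = number of anchored walks of length i)
    is a rational function. -/
theorem stmt12 {σ : Type} [Finite σ] (I : MonIdeal σ) :
    ∃ P Q : Polynomial ℤ, Q ≠ 0 ∧
      PowerSeries.mk (fun i => match i with
        | 0 => (1 : ℤ)
        | (j+1) => (growth I j : ℤ)) * (Q : PowerSeries ℤ) = (P : PowerSeries ℤ) := by
  classical
  set M := Relation.adjMatrix ℤ (Edge I) (boundedWords I)
  obtain ⟨P, hP⟩ := M.exists_mk_dotProduct_pow_mulVec_mul_charpolyRev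
    (fun a => if a.1.length = 1 then 1 else 0) 1
  have hseries : PowerSeries.mk (fun i => match i with
      | 0 => (1 : ℤ)
      | (j+1) => (growth I j : ℤ)) = 1 + PowerSeries.X * PowerSeries.mk (growth I · : ℕ → ℤ) := by
    ext (_ | n) <;> simp [PowerSeries.coeff_succ_X_mul]
  refine ⟨M.charpolyRev + Polynomial.X * P, M.charpolyRev,
    fun h => by simpa [h] using M.eval_charpolyRev, ?_⟩
  have hgrowth : PowerSeries.mk (growth I · : ℕ → ℤ) =
      PowerSeries.mk fun n => (fun a => if a.1.length = 1 then 1 else 0) ⬝ᵥ (M ^ n *ᵥ 1) :=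
    congrArg PowerSeries.mk (funext (growth_eq_dotProduct ℤ I))
  rw [hseries, add_mul, one_mul, mul_assoc, hgrowth, hP, Polynomial.coe_add, Polynomial.coe_mul,
    Polynomial.coe_X]
end CPS
end
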